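/- arXiv:2205.03527 — 2 statements merged into one kernel-verified Lean document; each statement's English description precedes it below -/
import Mathlib

section
/- Let n ≥ 2, let f ∈ 𝔪 ⊆ R be irreducible, and let k ≥ 1. Then the principal ideal (f^k) is a Tjurina ideal if and only if f has multiplicity one, i.e. ord(f) = 1 (equivalently f ∈ 𝔪 \ 𝔪²). -/
/-- The partial derivative `∂f/∂xⱼ` of a formal power series `f ∈ ℂ[[x₁,…,xₙ]]`,
defined coefficientwise. -/
noncomputable def pd {n : ℕ} (j : Fin n) (f : MvPowerSeries (Fin n) ℂ) :
    MvPowerSeries (Fin n) ℂ :=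
  fun d => ((d j + 1 : ℕ) : ℂ) * MvPowerSeries.coeff (d + Finsupp.single j 1) f

/-- The Tjurina ideal `T(f) = (f, ∂f/∂x₁, …, ∂f/∂xₙ)`. -/
noncomputable def Tj {n : ℕ} (f : MvPowerSeries (Fin n) ℂ) : Ideal (MvPowerSeries (Fin n) ℂ) :=
  Ideal.span ({f} ∪ Set.range fun j => pd j f)

/-- The set of antiderivatives `Δ(I) = {f : T(f) ⊆ I}`. -/
def Del {n : ℕ} (I : Ideal (MvPowerSeries (Fin n) ℂ)) : Set (MvPowerSeries (Fin n) ℂ) :=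
  {f | Tj f ≤ I}

/-- The Tjurina ideal of an arbitrary set of power series (for an ideal `J`, applied to its
carrier this computes `T(J) = T(g₁) + … + T(g_q)` for any system of generators). -/
noncomputable def Tset {n : ℕ} (A : Set (MvPowerSeries (Fin n) ℂ)) :
    Ideal (MvPowerSeries (Fin n) ℂ) :=
  Ideal.span (A ∪ {g | ∃ f ∈ A, ∃ j, g = pd j f})

/-- The maximal ideal `𝔪 = (x₁,…,xₙ)` of `ℂ[[x₁,…,xₙ]]`. -/
noncomputable def mm (n : ℕ) : Ideal (MvPowerSeries (Fin n) ℂ) :=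
  Ideal.span (Set.range (MvPowerSeries.X : Fin n → MvPowerSeries (Fin n) ℂ))


/-! If `ord f = 1`, some `∂ᵢf` is a unit and `(f^k) = T(f^(k+1))`. Conversely, suppose
`(f^k) = T(g)` with `k ≥ 1` and `ord f = m ≥ 2`. Writing `g = a f^k` and `∂ᵢg = bᵢ f^k` gives
`k a ∂ᵢf = (bᵢ - ∂ᵢa) f`, so `f ∣ a ∂ᵢf` for all `i`, and `f^k ∈ T(g)` gives `1 ∈ (a, b₁, …, bₙ)`.
Differentiating `f ∣ a ∂ᵢf` repeatedly yields `f ∣ a^m ∂^d f`, where `∂^d f` is a unit for any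
exponent `d` of degree `m` occurring in `f`. If `ord a ≤ 1`, comparing orders forces `f` to be
associated to `a^m`, which irreducibility forbids; so `ord a ≥ 2`. Then some `bᵢ - ∂ᵢa` is a unit,
so `f` is associated to `a ∂ᵢf`, whose order is at least `2 + (m - 1)`: a contradiction. -/

namespace Derivation

variable {R A : Type*} [CommSemiring R] [CommRing A] [Algebra R A]

theorem dvd_pow_length_mul_foldr {ι : Type*} (D : ι → Derivation R A A) {f a : A}
    (h : ∀ i, f ∣ a * D i f) (L : List ι) :
    f ∣ a ^ L.length * L.foldr (fun i g => D i g) f := by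
  induction L with
  | nil => simp
  | cons i L ih =>
    obtain ⟨w, hw⟩ := ih
    obtain ⟨t, ht⟩ := h i
    set g := L.foldr (fun i g => D i g) f
    have hpow : a * D i (a ^ L.length) = L.length * (a ^ L.length * D i a) := by
      cases L.length with
      | zero => simp
      | succ l => rw [leibniz_pow, nsmul_eq_mul, smul_eq_mul]; push_cast; ring
    have hdiff : a * D i (a ^ L.length * g) = a * D i (f * w) := by rw [hw]
    simp only [leibniz, smul_eq_mul] at hdiff
    refine ⟨t * w + a * D i w - L.length * (w * D i a), ?_⟩
    simp only [List.foldr_cons, List.length_cons]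
    linear_combination hdiff + w * ht - g * hpow - L.length * D i a * hw

theorem natCast_succ_mul_mul_apply_eq_of_apply_pow_succ_mul [IsDomain A] (D : Derivation R A A)
    {f a b : A} (hf : f ≠ 0) (k : ℕ) (h : D (f ^ (k + 1) * a) = f ^ (k + 1) * b) :
    (k + 1 : A) * (a * D f) = f * (b - D a) := by
  rw [leibniz, leibniz_pow, smul_eq_mul, smul_eq_mul, nsmul_eq_mul, smul_eq_mul,
    Nat.add_sub_cancel] at h
  apply mul_left_cancel₀ (pow_ne_zero k hf)
  push_cast at h
  linear_combination h

end Derivation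

namespace MvPowerSeries

open Finsupp

variable {σ : Type*}

instance {R : Type*} [CommRing R] [IsDomain R] : IsDomain (MvPowerSeries σ R) :=
  NoZeroDivisors.to_isDomain _

section Semiring

variable {R : Type*} [CommSemiring R]

theorem order_le_order_pderiv_add_one (i : σ) (f : MvPowerSeries σ R) :
    f.order ≤ (pderiv R i f).order + 1 := by
  obtain h | h := eq_or_ne (pderiv R i f).order ⊤
  · simp [h]
  obtain ⟨d, hd, hdeg⟩ := exists_coeff_ne_zero_and_order (ENat.natCast_toNat h)
  rw [coeff_pderiv] at hd
  calc f.order ≤ (degree (d + single i 1) : ℕ) := order_le (left_ne_zero_of_mul hd)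
    _ = (pderiv R i f).order + 1 := by rw [← hdeg, map_add, degree_single]; push_cast; rfl

section NoZeroDivisors

variable [NoZeroDivisors R]

theorem order_pow [Nontrivial R] (f : MvPowerSeries σ R) (m : ℕ) :
    (f ^ m).order = m • f.order := by
  induction m with
  | zero => simp [order]
  | succ m ih => rw [pow_succ, order_mul, ih, succ_nsmul]

theorem order_le_one_of_mul_pderiv_dvd {f a : MvPowerSeries σ R} {i : σ} (hf : f ≠ 0)
    (h : a * pderiv R i f ∣ f) : a.order ≤ 1 := by
  obtain ⟨c, hc⟩ := h
  have hord : f.order = a.order + (pderiv R i f).order + c.order := by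
    conv_lhs => rw [hc]
    rw [order_mul, order_mul]
  have hfin : (pderiv R i f).order ≠ ⊤ := fun htop =>
    hf (order_eq_top_iff.1 (by simp [hord, htop]))
  refine (ENat.add_le_add_iff_right hfin).1 ?_
  calc a.order + (pderiv R i f).order
      ≤ a.order + (pderiv R i f).order + c.order := le_self_add
    _ = f.order := hord.symm
    _ ≤ (pderiv R i f).order + 1 := order_le_order_pderiv_add_one i f
    _ = 1 + (pderiv R i f).order := add_comm _ _

end NoZeroDivisors

theorem constantCoeff_eq_zero_of_mem_span_X {f : MvPowerSeries σ R}
    (hf : f ∈ Ideal.span (Set.range X)) : constantCoeff f = 0 := by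
  suffices Ideal.span (Set.range X) ≤ RingHom.ker (constantCoeff (σ := σ) (R := R)) from this hf
  rw [Ideal.span_le]
  rintro _ ⟨i, rfl⟩
  exact constantCoeff_X i

theorem two_le_order_of_mem_span_X_sq {f : MvPowerSeries σ R}
    (hf : f ∈ Ideal.span (Set.range X) ^ 2) : 2 ≤ f.order := by
  rw [sq] at hf
  refine Submodule.mul_induction_on hf (fun x hx y hy => ?_)
    (fun x y hx hy => (le_min hx hy).trans min_order_le_add)
  have hx1 := one_le_order_iff_constCoeff_eq_zero.2 (constantCoeff_eq_zero_of_mem_span_X hx)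
  have hy1 := one_le_order_iff_constCoeff_eq_zero.2 (constantCoeff_eq_zero_of_mem_span_X hy)
  calc (2 : ℕ∞) = 1 + 1 := by norm_num
    _ ≤ x.order + y.order := add_le_add hx1 hy1
    _ ≤ (x * y).order := le_order_mul

variable [LinearOrder σ]

/-- The monomials of `f` whose smallest variable is `i`, divided by `X i`. -/
noncomputable def leadQuot (i : σ) (f : MvPowerSeries σ R) : MvPowerSeries σ R :=
  fun e => if (e + single i 1).support.min = (i : WithTop σ) then coeff (e + single i 1) f else 0

theorem coeff_X_mul_leadQuot (i : σ) (f : MvPowerSeries σ R) (d : σ →₀ ℕ) :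
    coeff d (X i * leadQuot i f) = if d.support.min = (i : WithTop σ) then coeff d f else 0 := by
  rw [X_def, coeff_monomial_mul, one_mul]
  by_cases hd : single i 1 ≤ d
  · rw [if_pos hd]
    change (if _ then _ else _) = _
    rw [tsub_add_cancel_of_le hd]
  · rw [if_neg hd, if_neg]
    intro hmin
    apply hd
    rw [single_le_iff, Nat.one_le_iff_ne_zero, ← mem_support_iff]
    exact Finset.mem_of_min hmin

theorem constantCoeff_leadQuot (i : σ) (f : MvPowerSeries σ R) :
    constantCoeff (leadQuot i f) = coeff (single i 1) f := by
  rw [← coeff_zero_eq_constantCoeff_apply]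
  change (if _ then _ else _) = _
  rw [zero_add, support_single _ one_ne_zero, Finset.min_singleton, if_pos rfl]

variable [Fintype σ]

theorem eq_sum_X_mul_leadQuot {f : MvPowerSeries σ R} (hf : constantCoeff f = 0) :
    f = ∑ i, X i * leadQuot i f := by
  ext d
  simp only [map_sum, coeff_X_mul_leadQuot]
  obtain rfl | hd := eq_or_ne d 0
  · simp [hf]
  · rw [← Finset.coe_min' (support_nonempty_iff.2 hd)]
    simp

theorem mem_span_X_iff {f : MvPowerSeries σ R} :
    f ∈ Ideal.span (Set.range X) ↔ constantCoeff f = 0 := by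
  refine ⟨constantCoeff_eq_zero_of_mem_span_X, fun hf => ?_⟩
  rw [eq_sum_X_mul_leadQuot hf]
  exact Ideal.sum_mem _ fun i _ => Ideal.mul_mem_right _ _ (Ideal.subset_span ⟨i, rfl⟩)

theorem mem_span_X_sq_iff {f : MvPowerSeries σ R} :
    f ∈ Ideal.span (Set.range X) ^ 2 ↔ 2 ≤ f.order := by
  refine ⟨two_le_order_of_mem_span_X_sq, fun hf => ?_⟩
  have hcoeff : ∀ d : σ →₀ ℕ, degree d < 2 → coeff d f = 0 := fun d hd =>
    coeff_of_lt_order (lt_of_lt_of_le (by exact_mod_cast hd) hf)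
  have hf0 : constantCoeff f = 0 := by
    rw [← coeff_zero_eq_constantCoeff_apply]
    exact hcoeff 0 (by simp)
  rw [eq_sum_X_mul_leadQuot hf0, sq]
  refine Ideal.sum_mem _ fun i _ => Ideal.mul_mem_mul (Ideal.subset_span ⟨i, rfl⟩) ?_
  rw [mem_span_X_iff, constantCoeff_leadQuot]
  exact hcoeff _ (by simp)

end Semiring

section Field

variable {K : Type*} [Field K]

theorem isUnit_iff_order_eq_zero {f : MvPowerSeries σ K} : IsUnit f ↔ f.order = 0 := by
  rw [isUnit_iff_constantCoeff, isUnit_iff_ne_zero, ne_eq,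
    ← order_ne_zero_iff_constCoeff_eq_zero, not_not]

theorem not_isUnit_iff_one_le_order {f : MvPowerSeries σ K} : ¬ IsUnit f ↔ 1 ≤ f.order := by
  rw [isUnit_iff_order_eq_zero, Order.one_le_iff_ne_zero]

theorem exists_isUnit_pderiv_of_order_eq_one {f : MvPowerSeries σ K} (hf : f.order = 1) :
    ∃ i, IsUnit (pderiv K i f) := by
  by_contra! h
  have hlin : ∀ i, coeff (single i 1) f = 0 := fun i => by
    simpa [isUnit_iff_constantCoeff, ← coeff_zero_eq_constantCoeff_apply, coeff_pderiv]
      using h i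
  have h0 : constantCoeff f = 0 := one_le_order_iff_constCoeff_eq_zero.1 hf.ge
  have h2 : ((2 : ℕ) : ℕ∞) ≤ f.order := nat_le_order fun d hd => by
    obtain hd | hd : degree d = 0 ∨ degree d = 1 := by omega
    · rw [(degree_eq_zero_iff d).1 hd, coeff_zero_eq_constantCoeff_apply, h0]
    · obtain ⟨i, rfl⟩ : d ∈ Set.range fun i => single i 1 := range_single_one ▸ hd
      exact hlin i
  rw [hf] at h2
  norm_num at h2

variable [CharZero K]

theorem isUnit_natCast_add_one (k : ℕ) : IsUnit (k + 1 : MvPowerSeries σ K) := by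
  rw [isUnit_iff_constantCoeff, isUnit_iff_ne_zero]
  simpa using Nat.cast_add_one_ne_zero (R := K) k

theorem exists_isUnit_foldr_pderiv_of_coeff_ne_zero {f : MvPowerSeries σ K} {d : σ →₀ ℕ}
    (hd : coeff d f ≠ 0) :
    ∃ L : List σ, L.length = degree d ∧ IsUnit (L.foldr (fun i g => pderiv K i g) f) := by
  obtain ⟨N, hN⟩ : ∃ N, degree d = N := ⟨_, rfl⟩
  induction N generalizing d f with
  | zero =>
    rw [degree_eq_zero_iff] at hN
    subst hN
    refine ⟨[], rfl, isUnit_iff_constantCoeff.2 (isUnit_iff_ne_zero.2 ?_)⟩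
    rwa [← coeff_zero_eq_constantCoeff_apply]
  | succ N ih =>
    obtain ⟨i, hi⟩ : ∃ i, d i ≠ 0 := by
      by_contra! h
      rw [show d = 0 from Finsupp.ext h, map_zero] at hN
      exact N.succ_ne_zero hN.symm
    have hle : single i 1 ≤ d := single_le_iff.2 (Nat.one_le_iff_ne_zero.2 hi)
    have hd' : coeff (d - single i 1) (pderiv K i f) ≠ 0 := by
      rw [coeff_pderiv, tsub_add_cancel_of_le hle]
      exact mul_ne_zero hd (Nat.cast_add_one_ne_zero _)
    have hN' : degree (d - single i 1) = N := by
      have := congrArg degree (tsub_add_cancel_of_le hle)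
      rw [map_add, degree_single] at this
      omega
    obtain ⟨L, hL, hU⟩ := ih hd' hN'
    exact ⟨L ++ [i], by simp [hL, hN, hN'], by rwa [List.foldr_append]⟩

theorem two_le_order_of_dvd_mul_pderiv {f a : MvPowerSeries σ K} (hf : Irreducible f)
    (hf2 : 2 ≤ f.order) (h : ∀ i, f ∣ a * pderiv K i f) : 2 ≤ a.order := by
  obtain ⟨d, hd, hdeg⟩ :=
    exists_coeff_ne_zero_and_order (ENat.natCast_toNat (order_eq_top_iff.not.2 hf.ne_zero))
  obtain ⟨L, hL, hU⟩ := exists_isUnit_foldr_pderiv_of_coeff_ne_zero hd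
  obtain ⟨t, ht⟩ := Derivation.dvd_pow_length_mul_foldr (fun i => pderiv K i) h L
  set U := L.foldr (fun i g => pderiv K i g) f
  set m := degree d
  rw [hL] at ht
  have hm : 2 ≤ m := by exact_mod_cast hdeg ▸ hf2
  have ha : ¬ IsUnit a := fun ha =>
    hf.not_isUnit (isUnit_of_dvd_unit ⟨t, ht⟩ ((ha.pow m).mul hU))
  by_contra ha2
  have ha1 : a.order = 1 :=
    le_antisymm (Order.le_of_lt_add_one (by simpa [one_add_one_eq_two] using ha2))
      (not_isUnit_iff_one_le_order.1 ha)
  have ht0 : t.order = 0 := by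
    have := congrArg order ht
    rw [order_mul, order_mul, order_pow, ha1, isUnit_iff_order_eq_zero.1 hU, ← hdeg,
      nsmul_one, add_zero] at this
    exact (WithTop.add_left_inj (ENat.natCast_ne_top m)).1 (this.symm.trans (add_zero _).symm)
  obtain ⟨u, rfl⟩ := isUnit_iff_order_eq_zero.2 ht0
  have hfa : f = a * (a ^ (m - 1) * U * ↑u⁻¹) :=
    calc f = f * ↑u * ↑u⁻¹ := by simp
      _ = a ^ (m - 1 + 1) * U * ↑u⁻¹ := by rw [← ht, Nat.sub_add_cancel (by omega)]
      _ = a * (a ^ (m - 1) * U * ↑u⁻¹) := by ring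
  refine ha ((hf.isUnit_or_isUnit hfa).resolve_right fun h => ha ?_)
  exact (isUnit_pow_iff (by omega)).1 (isUnit_of_mul_isUnit_left (isUnit_of_mul_isUnit_left h))

end Field

end MvPowerSeries

section Tjurina

open MvPowerSeries

variable {n : ℕ}

theorem pd_eq_pderiv (j : Fin n) (f : MvPowerSeries (Fin n) ℂ) : pd j f = pderiv ℂ j f := by
  ext d
  change ((d j + 1 : ℕ) : ℂ) * coeff (d + Finsupp.single j 1) f = _
  rw [coeff_pderiv]
  push_cast
  ring

theorem Tj_eq_span (f : MvPowerSeries (Fin n) ℂ) :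
    Tj f = Ideal.span (insert f (Set.range fun j => pderiv ℂ j f)) := by
  simp only [Tj, pd_eq_pderiv, Set.singleton_union]

theorem span_pow_eq_Tj_pow_succ {f : MvPowerSeries (Fin n) ℂ} {i : Fin n}
    (hi : IsUnit (pderiv ℂ i f)) (k : ℕ) : Ideal.span {f ^ k} = Tj (f ^ (k + 1)) := by
  have hpow : ∀ j, pderiv ℂ j (f ^ (k + 1)) = (k + 1) * pderiv ℂ j f * f ^ k := fun j => by
    rw [pderiv_pow, Nat.add_sub_cancel]
    push_cast
    ring
  rw [Tj_eq_span]
  apply le_antisymm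
  · rw [Ideal.span_singleton_le_iff_mem,
      ← Ideal.unit_mul_mem_iff_mem _ ((isUnit_natCast_add_one k).mul hi), ← hpow]
    exact Ideal.subset_span (Set.mem_insert_of_mem _ ⟨i, rfl⟩)
  · rw [Ideal.span_le, Set.insert_subset_iff, Set.range_subset_iff]
    refine ⟨Ideal.mem_span_singleton.2 ⟨f, pow_succ f k⟩, fun j => ?_⟩
    rw [hpow]
    exact Ideal.mem_span_singleton.2 (dvd_mul_left _ _)

theorem exists_of_span_singleton_eq_Tj {q g : MvPowerSeries (Fin n) ℂ} (hq : q ≠ 0)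
    (hg : Ideal.span {q} = Tj g) :
    ∃ (a : MvPowerSeries (Fin n) ℂ) (b : Fin n → MvPowerSeries (Fin n) ℂ),
      g = q * a ∧ (∀ i, pderiv ℂ i g = q * b i) ∧
      ∃ (c : MvPowerSeries (Fin n) ℂ) (c' : Fin n → MvPowerSeries (Fin n) ℂ),
        c * a + ∑ i, c' i * b i = 1 := by
  rw [Tj_eq_span] at hg
  have hdvd : ∀ x ∈ Ideal.span (insert g (Set.range fun j => pderiv ℂ j g)), q ∣ x :=
    fun x hx => Ideal.mem_span_singleton.1 (hg ▸ hx)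
  obtain ⟨a, ha⟩ := hdvd g (Ideal.subset_span (Set.mem_insert _ _))
  choose b hb using fun i => hdvd _ (Ideal.subset_span (Set.mem_insert_of_mem _ ⟨i, rfl⟩))
  obtain ⟨c, z, hz, hqz⟩ := Ideal.mem_span_insert.1 (hg ▸ Ideal.mem_span_singleton_self q)
  obtain ⟨c', rfl⟩ := Ideal.mem_span_range_iff_exists_fun.1 hz
  refine ⟨a, b, ha, hb, c, c', mul_left_cancel₀ hq ?_⟩
  simp only [hb] at hqz
  rw [mul_one, mul_add, Finset.mul_sum]
  nth_rewrite 3 [hqz]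
  rw [ha]
  ring_nf

theorem not_two_le_order_of_span_pow_succ_eq_Tj {f g : MvPowerSeries (Fin n) ℂ}
    (hf : Irreducible f) {k : ℕ} (hg : Ideal.span {f ^ (k + 1)} = Tj g) : ¬ 2 ≤ f.order := by
  intro hf2
  obtain ⟨a, b, rfl, hb, c, c', hone⟩ :=
    exists_of_span_singleton_eq_Tj (pow_ne_zero _ hf.ne_zero) hg
  have hrel := fun i =>
    (pderiv ℂ i).natCast_succ_mul_mul_apply_eq_of_apply_pow_succ_mul hf.ne_zero k (hb i)
  have ha2 : 2 ≤ a.order := two_le_order_of_dvd_mul_pderiv hf hf2 fun i =>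
    (isUnit_natCast_add_one k).dvd_mul_left.1 ⟨_, hrel i⟩
  have hna : ¬ IsUnit a := not_isUnit_iff_one_le_order.2 (one_le_two.trans ha2)
  obtain ⟨i, -, hbi⟩ := IsLocalRing.exists_of_isUnit_sum
    ((IsLocalRing.isUnit_or_isUnit_of_isUnit_add (hone ▸ isUnit_one)).resolve_left
      fun h => hna (isUnit_of_mul_isUnit_right h))
  have hnda : ¬ IsUnit (pderiv ℂ i a) := not_isUnit_iff_one_le_order.2
    ((ENat.add_le_add_iff_right ENat.one_ne_top).1
      (by rw [one_add_one_eq_two]; exact ha2.trans (order_le_order_pderiv_add_one i a)))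
  have hi : IsUnit (b i - pderiv ℂ i a) :=
    (IsLocalRing.isUnit_or_isUnit_of_isUnit_add
      (by rw [sub_add_cancel]; exact isUnit_of_mul_isUnit_right hbi)).resolve_right hnda
  have hdvd : a * pderiv ℂ i f ∣ f := hi.dvd_mul_right.1 (hrel i ▸ dvd_mul_left _ _)
  exact absurd (ha2.trans (order_le_one_of_mul_pderiv_dvd hf.ne_zero hdvd)) (by norm_num)

end Tjurina

theorem stmt_12_general {n : ℕ} (f : MvPowerSeries (Fin n) ℂ)
    (hfm : f ∈ mm n) (hf : Irreducible f) (k : ℕ) (hk : 1 ≤ k) :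
    (∃ g : MvPowerSeries (Fin n) ℂ, Ideal.span {f ^ k} = Tj g) ↔ f ∉ mm n ^ 2 := by
  obtain ⟨k, rfl⟩ := Nat.exists_eq_add_of_le' hk
  rw [mm, MvPowerSeries.mem_span_X_sq_iff]
  refine ⟨fun ⟨g, hg⟩ => not_two_le_order_of_span_pow_succ_eq_Tj hf hg, fun hf2 => ?_⟩
  have hf1 : f.order = 1 :=
    le_antisymm (Order.le_of_lt_add_one (by simpa [one_add_one_eq_two] using hf2))
      (MvPowerSeries.one_le_order_iff_constCoeff_eq_zero.2 (MvPowerSeries.mem_span_X_iff.1 hfm))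
  obtain ⟨i, hi⟩ := MvPowerSeries.exists_isUnit_pderiv_of_order_eq_one hf1
  exact ⟨f ^ (k + 2), span_pow_eq_Tj_pow_succ hi _⟩

/-- for `n ≥ 2`, `f ∈ 𝔪` irreducible and `k ≥ 1`, the ideal `(f^k)` is a
Tjurina ideal iff `f` has multiplicity one, i.e. `f ∉ 𝔪²`. -/
theorem stmt_12 {n : ℕ} (hn : 2 ≤ n) (f : MvPowerSeries (Fin n) ℂ)
    (hfm : f ∈ mm n) (hf : Irreducible f) (k : ℕ) (hk : 1 ≤ k) :
    (∃ g : MvPowerSeries (Fin n) ℂ, Ideal.span {f ^ k} = Tj g) ↔ f ∉ mm n ^ 2 :=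
  stmt_12_general f hfm hf k hk
end

section
/- Every irreducible monomial ideal of R is a Tjurina ideal: if 1 ≤ i₁ < … < i_s ≤ n and e₁,…,e_s ≥ 1, then (x_{i₁}^{e₁}, …, x_{i_s}^{e_s}) = T(x_{i₁}^{e₁+1} + … + x_{i_s}^{e_s+1}). -/
open MvPowerSeries

variable {n : ℕ}

lemma coeff_pd (j : Fin n) (f : MvPowerSeries (Fin n) ℂ) (d : Fin n →₀ ℕ) :
    coeff d (pd j f) = ((d j + 1 : ℕ) : ℂ) * coeff (d + Finsupp.single j 1) f :=
  rfl

lemma pd_sum (k : Fin n) {α : Type*} (t : Finset α) (f : α → MvPowerSeries (Fin n) ℂ) :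
    pd k (∑ a ∈ t, f a) = ∑ a ∈ t, pd k (f a) := by
  ext d
  simp only [coeff_pd, map_sum, Finset.mul_sum]

lemma pd_X_pow_succ (k i : Fin n) (m : ℕ) :
    pd k ((X i : MvPowerSeries (Fin n) ℂ) ^ (m + 1))
      = if k = i then ((m + 1 : ℕ) : ℂ) • (X i : MvPowerSeries (Fin n) ℂ) ^ m else 0 := by
  ext d
  rw [coeff_pd, coeff_X_pow]
  by_cases hki : k = i
  · subst hki
    simp only [if_pos, map_smul, coeff_X_pow, Finsupp.single_add k m 1, add_left_inj]
    split_ifs with hd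
    · simp [hd]
    · simp
  · have hd : d + Finsupp.single k 1 ≠ Finsupp.single i (m + 1) := by
      intro h
      simpa [Finsupp.single_apply, Ne.symm hki] using DFunLike.congr_fun h k
    rw [if_neg hd, if_neg hki, mul_zero, map_zero]

lemma Tj_le_iff {f : MvPowerSeries (Fin n) ℂ} {I : Ideal (MvPowerSeries (Fin n) ℂ)} :
    Tj f ≤ I ↔ f ∈ I ∧ ∀ j, pd j f ∈ I := by
  simp [Tj, Ideal.span_le, Set.insert_subset_iff, Set.range_subset_iff]

lemma pd_mem_Tj (j : Fin n) (f : MvPowerSeries (Fin n) ℂ) : pd j f ∈ Tj f :=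
  (Tj_le_iff.mp le_rfl).2 j

section SumOfPowers

variable {σ : Type*} [Fintype σ] (e : σ → ℕ)

lemma pd_sum_X_pow_succ (ι : σ → Fin n) (k : Fin n) :
    pd k (∑ j, (X (ι j) : MvPowerSeries (Fin n) ℂ) ^ (e j + 1))
      = ∑ j, if k = ι j then ((e j + 1 : ℕ) : ℂ) • (X (ι j) : MvPowerSeries (Fin n) ℂ) ^ e j
          else 0 := by
  simp only [pd_sum, pd_X_pow_succ]

lemma pd_apply_sum_X_pow_succ {ι : σ → Fin n} (hι : Function.Injective ι) (j : σ) :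
    pd (ι j) (∑ j, (X (ι j) : MvPowerSeries (Fin n) ℂ) ^ (e j + 1))
      = ((e j + 1 : ℕ) : ℂ) • (X (ι j) : MvPowerSeries (Fin n) ℂ) ^ e j := by
  rw [pd_sum_X_pow_succ, Finset.sum_eq_single j (fun i _ hij => if_neg (hι.ne hij.symm))
    (fun hj => absurd (Finset.mem_univ j) hj), if_pos rfl]

end SumOfPowers

theorem stmt_19_general {n s : ℕ} (ι : Fin s → Fin n) (hι : StrictMono ι)
    (e : Fin s → ℕ) :
    Ideal.span (Set.range fun j => (MvPowerSeries.X (ι j) : MvPowerSeries (Fin n) ℂ) ^ e j)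
      = Tj (∑ j, (MvPowerSeries.X (ι j) : MvPowerSeries (Fin n) ℂ) ^ (e j + 1)) := by
  set I := Ideal.span (Set.range fun j => (X (ι j) : MvPowerSeries (Fin n) ℂ) ^ e j)
  set f := ∑ j, (X (ι j) : MvPowerSeries (Fin n) ℂ) ^ (e j + 1)
  have hgen : ∀ j, (X (ι j) : MvPowerSeries (Fin n) ℂ) ^ e j ∈ I :=
    fun j => Ideal.subset_span ⟨j, rfl⟩
  apply le_antisymm
  · refine Ideal.span_le.mpr (Set.range_subset_iff.mpr fun j => ?_)
    have hj : (X (ι j) : MvPowerSeries (Fin n) ℂ) ^ e j = ((e j + 1 : ℕ) : ℂ)⁻¹ • pd (ι j) f := by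
      rw [pd_apply_sum_X_pow_succ e hι.injective,
        inv_smul_smul₀ (Nat.cast_ne_zero.mpr (Nat.succ_ne_zero _))]
    rw [SetLike.mem_coe, hj]
    exact Submodule.smul_of_tower_mem _ _ (pd_mem_Tj _ _)
  · refine Tj_le_iff.mpr ⟨Ideal.sum_mem _ fun j _ => ?_, fun k => ?_⟩
    · rw [pow_succ']
      exact Ideal.mul_mem_left _ _ (hgen j)
    · rw [pd_sum_X_pow_succ]
      refine Ideal.sum_mem _ fun j _ => ?_
      split_ifs
      · exact Submodule.smul_of_tower_mem _ _ (hgen j)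
      · exact I.zero_mem

/-- every irreducible monomial ideal is a Tjurina ideal:
`(x_{i₁}^{e₁}, …, x_{i_s}^{e_s}) = T(x_{i₁}^{e₁+1} + … + x_{i_s}^{e_s+1})`. -/
theorem stmt_19 {n s : ℕ} (ι : Fin s → Fin n) (hι : StrictMono ι)
    (e : Fin s → ℕ) (he : ∀ j, 1 ≤ e j) :
    Ideal.span (Set.range fun j => (MvPowerSeries.X (ι j) : MvPowerSeries (Fin n) ℂ) ^ e j)
      = Tj (∑ j, (MvPowerSeries.X (ι j) : MvPowerSeries (Fin n) ℂ) ^ (e j + 1)) :=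
  stmt_19_general ι hι e
end
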